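/- Let $B > 0$, $\lambda > 0$ with $B\lambda^2 \neq 1$, let $c > 0$ and $l \in \mathbb{N}_0$. Then the squared width of the $l$-th Landau band for the Gaussian covariance function $C(x) = c\, e^{-|x|^2/(2\lambda^2)}$ is given exactly by $\sigma_l^2 \;:=\; \frac{B}{2\pi}\int_{\mathbb{R}^2} e^{-\frac{B}{2}|x|^2}\,\Big[\mathrm{L}_l\big(\tfrac{B}{2}|x|^2\big)\Big]^2\, c\, e^{-|x|^2/(2\lambda^2)}\, dx \;=\; c\,\frac{B\lambda^2}{B\lambda^2+1}\left(\frac{B\lambda^2-1}{B\lambda^2+1}\right)^{l} \mathrm{P}_l\!\left(\frac{(B\lambda^2)^2+1}{(B\lambda^2)^2-1}\right)$, where $\mathrm{P}_l$ is the $l$-th Legendre polynomial. -/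

import Mathlib

open MeasureTheory Real

/-- The `l`-th Laguerre polynomial `L_l(ξ) = ∑_{k=0}^{l} (l choose k) (-ξ)^k / k!`. -/
noncomputable def laguerre (l : ℕ) (ξ : ℝ) : ℝ :=
  ∑ k ∈ Finset.range (l + 1), (l.choose k : ℝ) * (-ξ) ^ k / (Nat.factorial k : ℝ)

/-- The `l`-th Legendre polynomial `P_l(ξ) = (1/(l! 2^l)) dˡ/dξˡ (ξ²-1)ˡ`
(Rodrigues' formula). -/
noncomputable def legendre (l : ℕ) (ξ : ℝ) : ℝ :=
  (1 / ((Nat.factorial l : ℝ) * 2 ^ l)) *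
    (Polynomial.derivative^[l] ((Polynomial.X ^ 2 - 1) ^ l : Polynomial ℝ)).eval ξ

open Finset Set

private lemma vand' (j j' : ℕ) :
    ((j + j').choose j : ℕ) = ∑ k ∈ Finset.range (j + 1), j.choose k * j'.choose k := by
  rw [Nat.add_choose_eq, Finset.Nat.sum_antidiagonal_eq_sum_range_succ_mk,
    ← Finset.sum_range_reflect]
  refine Finset.sum_congr rfl fun k hk => ?_
  have hk' : k ≤ j := Nat.lt_succ_iff.mp (Finset.mem_range.mp hk)
  have h1 : j.succ - 1 - k = j - k := by omega
  rw [h1, Nat.sub_sub_self hk', Nat.choose_symm hk']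

private lemma innerSum (l k : ℕ) (u : ℝ) :
    ∑ j ∈ range (l + 1), (l.choose j : ℝ) * (j.choose k : ℝ) * u ^ j
      = (l.choose k : ℝ) * u ^ k * (1 + u) ^ (l - k) := by
  rcases le_or_gt k l with hkl | hkl
  · have hsub : Finset.Ico k (l + 1) ⊆ range (l + 1) := by
      intro x hx; simp only [Finset.mem_Ico] at hx; exact Finset.mem_range.mpr hx.2
    rw [← Finset.sum_subset hsub (fun j hj hj' => by
        have : j < k := by
          simp only [Finset.mem_range] at hj
          simp only [Finset.mem_Ico, not_and, not_le] at hj'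
          omega
        rw [Nat.choose_eq_zero_of_lt this]; ring)]
    rw [Finset.sum_Ico_eq_sum_range]
    have h2 : l + 1 - k = (l - k) + 1 := by omega
    rw [h2]
    have h3 : ∀ a ∈ range (l - k + 1),
        ((l.choose (k + a)) : ℝ) * ((k + a).choose k : ℝ) * u ^ (k + a)
          = (l.choose k : ℝ) * u ^ k * (((l - k).choose a : ℝ) * u ^ a) := by
      intro a ha
      have haa : k + a ≤ l := by
        have := Finset.mem_range.mp ha; omega
      have hn := Nat.choose_mul (n := l) (Nat.le_add_right k a)
      rw [Nat.add_sub_cancel_left] at hn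
      have hcast : ((l.choose (k + a)) : ℝ) * ((k + a).choose k : ℝ)
          = (l.choose k : ℝ) * ((l - k).choose a : ℝ) := by exact_mod_cast hn
      rw [pow_add, hcast]; ring
    rw [Finset.sum_congr rfl h3, ← Finset.mul_sum]
    congr 1
    rw [add_comm (1:ℝ) u, add_pow]
    simp [mul_comm]
  · rw [Nat.choose_eq_zero_of_lt hkl]
    rw [Finset.sum_eq_zero]
    · simp
    intro j hj
    rw [Nat.choose_eq_zero_of_lt (lt_of_le_of_lt (Nat.lt_succ_iff.mp (Finset.mem_range.mp hj)) hkl)]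
    simp

private lemma keyIdentity (l : ℕ) (u : ℝ) :
    ∑ j ∈ range (l + 1), ∑ j' ∈ range (l + 1),
        (l.choose j : ℝ) * (l.choose j' : ℝ) * ((j + j').choose j : ℝ) * u ^ (j + j')
      = ∑ k ∈ range (l + 1), (l.choose k : ℝ) ^ 2 * u ^ (2 * k) * (1 + u) ^ (2 * (l - k)) := by
  have step1 : ∀ j ∈ range (l + 1), ∀ j' ∈ range (l + 1),
      (l.choose j : ℝ) * (l.choose j' : ℝ) * ((j + j').choose j : ℝ) * u ^ (j + j')
        = ∑ k ∈ range (l + 1),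
            ((l.choose j : ℝ) * (j.choose k : ℝ) * u ^ j) *
            ((l.choose j' : ℝ) * (j'.choose k : ℝ) * u ^ j') := by
    intro j hj j' hj'
    have hjl : j + 1 ≤ l + 1 := Finset.mem_range.mp hj
    have hext : ∑ k ∈ range (l + 1), (j.choose k : ℝ) * (j'.choose k : ℝ)
        = ∑ k ∈ range (j + 1), (j.choose k : ℝ) * (j'.choose k : ℝ) := by
      refine (Finset.sum_subset (Finset.range_subset_range.mpr hjl) ?_).symm
      intro k hk hk'
      have : j < k := by simp only [Finset.mem_range] at hk'; omega
      rw [Nat.choose_eq_zero_of_lt this]; ring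
    have hv : ((j + j').choose j : ℝ)
        = ∑ k ∈ range (l + 1), (j.choose k : ℝ) * (j'.choose k : ℝ) := by
      rw [hext]; exact_mod_cast vand' j j'
    rw [hv, Finset.mul_sum, Finset.sum_mul]
    refine Finset.sum_congr rfl fun k _ => ?_
    rw [pow_add]; ring
  rw [Finset.sum_congr rfl (fun j hj => Finset.sum_congr rfl (step1 j hj))]
  rw [Finset.sum_congr rfl (fun j _ => Finset.sum_comm), Finset.sum_comm]
  refine Finset.sum_congr rfl fun k _ => ?_
  rw [← Finset.sum_mul_sum, innerSum]
  ring

private lemma legendre_eval (l : ℕ) (ξ : ℝ) :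
    legendre l ξ = ∑ k ∈ range (l + 1),
      (l.choose k : ℝ) ^ 2 * ((ξ - 1) / 2) ^ k * ((ξ + 1) / 2) ^ (l - k) := by
  have hfac : ((Polynomial.X ^ 2 - 1 : Polynomial ℝ)) ^ l
      = (Polynomial.X - Polynomial.C 1) ^ l * (Polynomial.X - Polynomial.C (-1)) ^ l := by
    rw [← mul_pow]; congr 1; simp [Polynomial.C_1]; ring
  rw [legendre, hfac, Polynomial.iterate_derivative_mul]
  rw [Polynomial.eval_finset_sum, Finset.mul_sum]
  refine Finset.sum_congr rfl fun k hk => ?_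
  have hkl : k ≤ l := Nat.lt_succ_iff.mp (Finset.mem_range.mp hk)
  rw [Polynomial.iterate_derivative_X_sub_pow, Polynomial.iterate_derivative_X_sub_pow]
  have hll : l - (l - k) = k := by omega
  simp only [Polynomial.eval_smul, Polynomial.eval_mul, Polynomial.eval_smul,
    Polynomial.eval_pow, Polynomial.eval_sub, Polynomial.eval_X, Polynomial.eval_C,
    smul_eq_mul, nsmul_eq_mul, hll]
  have hd1 : (l.descFactorial (l - k) : ℝ) = ((l - k).factorial : ℝ) * (l.choose k : ℝ) := by
    rw [Nat.descFactorial_eq_factorial_mul_choose, Nat.choose_symm hkl]; push_cast; ring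
  have hd2 : (l.descFactorial k : ℝ) = (k.factorial : ℝ) * (l.choose k : ℝ) := by
    rw [Nat.descFactorial_eq_factorial_mul_choose]; push_cast; ring
  have hfact : ((l.choose k : ℝ)) * (k.factorial : ℝ) * ((l - k).factorial : ℝ)
      = (l.factorial : ℝ) := by exact_mod_cast Nat.choose_mul_factorial_mul_factorial hkl
  have h2l : (2:ℝ) ^ k * 2 ^ (l - k) = 2 ^ l := by
    rw [← pow_add]; congr 1; omega
  have hlfac : (l.factorial : ℝ) ≠ 0 := Nat.cast_ne_zero.mpr (Nat.factorial_ne_zero l)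
  have h2ne : (2:ℝ) ^ l ≠ 0 := by positivity
  rw [div_pow, div_pow]
  field_simp [hd1, hd2]
  simp only [Polynomial.eval_natCast, hd1, hd2]
  rw [← h2l, ← hfact]; ring

private lemma moment_integral {α : ℝ} (hα : 0 < α) (m : ℕ) :
    ∫ t in Ioi (0:ℝ), t ^ m * Real.exp (-(α * t)) = (m.factorial : ℝ) / α ^ (m + 1) := by
  have h := integral_rpow_mul_exp_neg_mul_Ioi (a := (m : ℝ) + 1) (r := α)
    (by positivity) hα
  rw [add_sub_cancel_right] at h
  simp_rw [Real.rpow_natCast] at h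
  rw [h, Real.Gamma_nat_eq_factorial]
  have hh : (1/α) ^ ((m:ℝ) + 1) = (1/α) ^ (m + 1) := by
    rw [← Real.rpow_natCast (1/α) (m+1)]; norm_num
  rw [hh, div_pow, one_pow]
  ring

private lemma moment_integrable {α : ℝ} (hα : 0 < α) (m : ℕ) :
    IntegrableOn (fun t : ℝ => t ^ m * Real.exp (-(α * t))) (Ioi 0) := by
  have h := integrableOn_rpow_mul_exp_neg_mul_rpow (p := 1) (s := (m : ℝ)) (b := α)
    (lt_of_lt_of_le neg_one_lt_zero (Nat.cast_nonneg m)) zero_lt_one hα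
  refine h.congr_fun (fun t ht => ?_) measurableSet_Ioi
  dsimp only
  rw [Real.rpow_natCast, Real.rpow_one, neg_mul]

private lemma radial_integral (F : ℝ → ℝ) :
    ∫ x : ℝ × ℝ, F (x.1 ^ 2 + x.2 ^ 2) = π * ∫ t in Ioi (0:ℝ), F t := by
  rw [← integral_comp_polarCoord_symm]
  have h1 : ∀ p : ℝ × ℝ,
      p.1 • F ((polarCoord.symm p).1 ^ 2 + (polarCoord.symm p).2 ^ 2)
        = (p.1 * F (p.1 ^ 2)) * (1 : ℝ) := by
    intro p
    rw [polarCoord_symm_apply]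
    simp only [smul_eq_mul, mul_one]
    congr 2
    rw [mul_pow, mul_pow, ← mul_add, Real.cos_sq_add_sin_sq, mul_one]
  simp_rw [h1]
  rw [polarCoord_target, Measure.volume_eq_prod,
    setIntegral_prod_mul (fun r : ℝ => r * F (r ^ 2)) (fun _ : ℝ => (1:ℝ)) (Ioi 0) (Ioo (-π) π)]
  simp only [integral_const, MeasurableSet.univ, Measure.restrict_apply, univ_inter,
    Real.volume_Ioo, smul_eq_mul, mul_one]
  rw [Measure.real, Measure.restrict_apply MeasurableSet.univ, univ_inter, Real.volume_Ioo,
    ENNReal.toReal_ofReal (by linarith [Real.pi_pos] : (0:ℝ) ≤ π - -π)]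
  have h2 : ∫ r in Ioi (0:ℝ), r * F (r ^ 2) = (1 / 2) * ∫ t in Ioi (0:ℝ), F t := by
    have := integral_comp_rpow_Ioi (g := F) (p := 2) two_ne_zero
    simp only [smul_eq_mul] at this
    have h3 : ∀ r ∈ Ioi (0:ℝ),
        |(2:ℝ)| * r ^ ((2:ℝ) - 1) * F (r ^ (2:ℝ)) = 2 * (r * F (r ^ 2)) := by
      intro r hr
      rw [abs_two, show ((2:ℝ) - 1) = 1 by norm_num, Real.rpow_one,
        show ((2:ℝ)) = ((2:ℕ):ℝ) by norm_num, Real.rpow_natCast]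
      ring
    rw [setIntegral_congr_fun measurableSet_Ioi h3, MeasureTheory.integral_const_mul] at this
    linarith
  rw [h2]; ring

/-- Exact squared width of the `l`-th Landau band for the Gaussian covariance function
`C(x) = c exp(-|x|²/(2λ²))`:
`σ_l² = c (Bλ²/(Bλ²+1)) ((Bλ²-1)/(Bλ²+1))^l P_l(((Bλ²)²+1)/((Bλ²)²-1))`. -/
theorem landau_band_width_gaussian_covariance (B lam c : ℝ) (hB : 0 < B)
    (hlam : 0 < lam) (hne : B * lam ^ 2 ≠ 1) (hc : 0 < c) (l : ℕ) :
    (B / (2 * Real.pi)) *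
        ∫ x : ℝ × ℝ, Real.exp (-(B / 2) * (x.1 ^ 2 + x.2 ^ 2)) *
          laguerre l (B / 2 * (x.1 ^ 2 + x.2 ^ 2)) ^ 2 *
          (c * Real.exp (-(x.1 ^ 2 + x.2 ^ 2) / (2 * lam ^ 2)))
      = c * (B * lam ^ 2 / (B * lam ^ 2 + 1)) *
          ((B * lam ^ 2 - 1) / (B * lam ^ 2 + 1)) ^ l *
          legendre l (((B * lam ^ 2) ^ 2 + 1) / ((B * lam ^ 2) ^ 2 - 1)) := by
  have hπ : (0:ℝ) < π := Real.pi_pos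
  have hπne : (π:ℝ) ≠ 0 := ne_of_gt hπ
  have hlamne : lam ≠ 0 := ne_of_gt hlam
  set s : ℝ := B * lam ^ 2 with hs_def
  have hs : 0 < s := by positivity
  have hs1 : s + 1 ≠ 0 := by positivity
  have hsm : s - 1 ≠ 0 := sub_ne_zero.mpr hne
  have hs2 : s ^ 2 - 1 ≠ 0 := by
    rw [show s ^ 2 - 1 = (s - 1) * (s + 1) by ring]; exact mul_ne_zero hsm hs1
  set α : ℝ := B / 2 + 1 / (2 * lam ^ 2) with hα_def
  have hα : 0 < α := by rw [hα_def]; positivity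
  have hαne : α ≠ 0 := ne_of_gt hα
  set z : ℝ := s / (s + 1) with hz_def
  have hBα : B / 2 = z * α := by
    rw [hz_def, hα_def, hs_def]; field_simp
  -- Step 1: radial reduction
  have h1 : (∫ x : ℝ × ℝ, Real.exp (-(B / 2) * (x.1 ^ 2 + x.2 ^ 2)) *
          laguerre l (B / 2 * (x.1 ^ 2 + x.2 ^ 2)) ^ 2 *
          (c * Real.exp (-(x.1 ^ 2 + x.2 ^ 2) / (2 * lam ^ 2))))
      = π * ∫ t in Ioi (0:ℝ), Real.exp (-(B / 2) * t) * laguerre l (B / 2 * t) ^ 2 *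
          (c * Real.exp (-t / (2 * lam ^ 2))) :=
    radial_integral (fun t => Real.exp (-(B / 2) * t) * laguerre l (B / 2 * t) ^ 2 *
      (c * Real.exp (-t / (2 * lam ^ 2))))
  -- Step 2: expand the Laguerre square and integrate term by term
  have hL : ∀ t : ℝ, Real.exp (-(B / 2) * t) * laguerre l (B / 2 * t) ^ 2 *
        (c * Real.exp (-t / (2 * lam ^ 2)))
      = ∑ j ∈ Finset.range (l+1), ∑ k ∈ Finset.range (l+1),
          (c * ((l.choose j : ℝ) * (-(B/2))^j / (j.factorial : ℝ)) *
            ((l.choose k : ℝ) * (-(B/2))^k / (k.factorial : ℝ)))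
            * (t ^ (j+k) * Real.exp (-(α * t))) := by
    intro t
    have hexp : Real.exp (-(B / 2) * t) * Real.exp (-t / (2 * lam ^ 2))
        = Real.exp (-(α * t)) := by
      rw [← Real.exp_add]; congr 1; rw [hα_def]; field_simp; ring
    simp only [laguerre]
    rw [pow_two, Finset.sum_mul_sum, Finset.mul_sum, Finset.sum_mul]
    refine Finset.sum_congr rfl fun j _ => ?_
    rw [Finset.mul_sum, Finset.sum_mul]
    refine Finset.sum_congr rfl fun k _ => ?_
    rw [← hexp]
    ring
  have h2 : (∫ t in Ioi (0:ℝ), Real.exp (-(B / 2) * t) * laguerre l (B / 2 * t) ^ 2 *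
        (c * Real.exp (-t / (2 * lam ^ 2))))
      = ∑ j ∈ Finset.range (l+1), ∑ k ∈ Finset.range (l+1),
          (c * ((l.choose j : ℝ) * (-(B/2))^j / (j.factorial : ℝ)) *
            ((l.choose k : ℝ) * (-(B/2))^k / (k.factorial : ℝ)))
            * (((j+k).factorial : ℝ) / α ^ (j+k+1)) := by
    rw [setIntegral_congr_fun measurableSet_Ioi (fun t _ => hL t)]
    rw [integral_finset_sum _ (fun j _ => integrable_finset_sum _
      (fun k _ => ((moment_integrable hα (j+k)).const_mul _)))]
    refine Finset.sum_congr rfl fun j _ => ?_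
    rw [integral_finset_sum _ (fun k _ => ((moment_integrable hα (j+k)).const_mul _))]
    refine Finset.sum_congr rfl fun k _ => ?_
    rw [MeasureTheory.integral_const_mul, moment_integral hα (j+k)]
  have h1z : (1 : ℝ) + -z = 1/(s+1) := by rw [hz_def]; field_simp; ring
  have hξ1 : (((s^2+1)/(s^2-1) - 1)/2 : ℝ) = 1/((s-1)*(s+1)) := by
    rw [show s ^ 2 - 1 = (s - 1) * (s + 1) by ring] at hs2 ⊢
    field_simp; ring
  have hξ2 : (((s^2+1)/(s^2-1) + 1)/2 : ℝ) = s^2/((s-1)*(s+1)) := by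
    rw [show s ^ 2 - 1 = (s - 1) * (s + 1) by ring] at hs2 ⊢
    field_simp; ring
  clear_value s α z
  rw [h1, h2]
  -- Step 3: algebraic reduction to the key combinatorial identity
  have h3 : B / (2 * π) * (π * ∑ j ∈ Finset.range (l+1), ∑ k ∈ Finset.range (l+1),
        (c * ((l.choose j : ℝ) * (-(B/2))^j / (j.factorial : ℝ)) *
          ((l.choose k : ℝ) * (-(B/2))^k / (k.factorial : ℝ)))
          * (((j+k).factorial : ℝ) / α ^ (j+k+1)))
      = c * z * ∑ j ∈ Finset.range (l+1), ∑ k ∈ Finset.range (l+1),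
          (l.choose j : ℝ) * (l.choose k : ℝ) * ((j + k).choose j : ℝ) * (-z) ^ (j + k) := by
    rw [show B / (2 * π) * (π * (∑ j ∈ Finset.range (l+1), ∑ k ∈ Finset.range (l+1),
        (c * ((l.choose j : ℝ) * (-(B/2))^j / (j.factorial : ℝ)) *
          ((l.choose k : ℝ) * (-(B/2))^k / (k.factorial : ℝ)))
          * (((j+k).factorial : ℝ) / α ^ (j+k+1))))
      = (B/2) * (∑ j ∈ Finset.range (l+1), ∑ k ∈ Finset.range (l+1),
        (c * ((l.choose j : ℝ) * (-(B/2))^j / (j.factorial : ℝ)) *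
          ((l.choose k : ℝ) * (-(B/2))^k / (k.factorial : ℝ)))
          * (((j+k).factorial : ℝ) / α ^ (j+k+1))) from by field_simp]
    simp_rw [Finset.mul_sum]
    refine Finset.sum_congr rfl fun j _ => Finset.sum_congr rfl fun k _ => ?_
    have hw : (-(B/2) : ℝ) = (-z) * α := by rw [hBα]; ring
    have hn := Nat.choose_mul_factorial_mul_factorial (Nat.le_add_right j k)
    rw [Nat.add_sub_cancel_left] at hn
    have hfac : (((j+k).factorial : ℝ)) = ((j+k).choose j : ℝ) * j.factorial * k.factorial := by
      exact_mod_cast hn.symm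
    have hjne : (j.factorial : ℝ) ≠ 0 := Nat.cast_ne_zero.mpr (Nat.factorial_ne_zero j)
    have hkne : (k.factorial : ℝ) ≠ 0 := Nat.cast_ne_zero.mpr (Nat.factorial_ne_zero k)
    rw [hw, mul_pow, mul_pow, hfac]
    field_simp
    rw [show B = 2*(z*α) by linarith]
    ring
  rw [h3, keyIdentity l (-z), legendre_eval]
  have hneg : ∀ k : ℕ, ((-z):ℝ)^(2*k) = z^(2*k) := fun k => by
    rw [pow_mul, pow_mul, neg_sq]
  simp_rw [h1z, hneg]
  rw [← Finset.sum_range_reflect]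
  simp only [Nat.add_sub_cancel]
  simp_rw [Finset.mul_sum]
  refine Finset.sum_congr rfl fun k hk => ?_
  have hkl : k ≤ l := Nat.lt_succ_iff.mp (Finset.mem_range.mp hk)
  rw [Nat.sub_sub_self hkl, Nat.choose_symm hkl]
  obtain ⟨m, rfl⟩ : ∃ m, l = k + m := ⟨l - k, by omega⟩
  rw [Nat.add_sub_cancel_left]
  rw [hξ1, hξ2, hz_def]
  field_simp
  simp only [div_pow, mul_pow, one_pow, pow_add]
  field_simp
  ring
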